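/- arXiv:2103.04861 — 2 statements merged into one kernel-verified Lean document; each statement's English description precedes it below -/
import Mathlib

section
/- For every nonnegative integer n, the function P_n is strictly decreasing on (0, ∞), i.e., P_n'(r) < 0 for all r > 0. -/
/-! With `x = r² / 4` one has `I_m(r) = (r / 2)^m g_m(x)` for the entire function
`g_m(x) = ∑ x^k / (k! (m + k)!)`, so `P_n(r) = g_{n+1}(x) / (2 g_n(x))`, and `g_m' = g_{m+1}`.
The derivative therefore has the sign of `g_{n+2} g_n - g_{n+1}²`. Multiplied by `x`, this is the
double series `∑_{k,j} (k - j) a_k b_j x^(k+j)` with `a`, `b` the coefficients of `g_{n+1}`, `g_n`.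
Pairing `(k, j)` with `(j, k)` gives terms `(k - j)(a_k b_j - a_j b_k) x^(k+j) ≤ 0`, since
`a_k / b_k = 1 / (n + k + 1)` decreases strictly; the pair `(1, 0)` is strictly negative. -/

open Real Filter Set

/-- Modified Bessel function of the first kind of (integer) order `n`. -/
noncomputable def besselI (n : ℕ) (r : ℝ) : ℝ :=
  ∑' k : ℕ, (1 / (k.factorial * Real.Gamma (n + k + 1))) * (r / 2) ^ (n + 2 * k)

/-- `P n r = I_{n+1}(r) / (r * I_n(r))`. -/
noncomputable def P (n : ℕ) (r : ℝ) : ℝ := besselI (n + 1) r / (r * besselI n r)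

theorem tsum_neg_of_add_swap_nonpos {α : Type*} {F : α × α → ℝ} (hF : Summable F)
    (hle : ∀ p : α × α, F p + F p.swap ≤ 0) {p₀ : α × α} (hlt : F p₀ + F p₀.swap < 0) :
    ∑' p, F p < 0 := by
  have hswap : Summable fun p : α × α => F p.swap := (Equiv.prodComm α α).summable_iff.2 hF
  have htwice : ∑' p : α × α, (F p + F p.swap) = 2 * ∑' p, F p := by
    rw [hF.tsum_add hswap, ← (Equiv.prodComm α α).tsum_eq F]
    simp only [Equiv.prodComm_apply]
    ring
  have hneg : ∑' p : α × α, (F p + F p.swap) < ∑' _ : α × α, (0 : ℝ) :=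
    (hF.add hswap).tsum_lt_tsum hle hlt summable_zero
  rw [tsum_zero, htwice] at hneg
  linarith

theorem sub_mul_sub_neg_of_strictAnti_div {a b : ℕ → ℝ} (hb : ∀ k, 0 < b k)
    (hab : StrictAnti fun k => a k / b k) {j k : ℕ} (hjk : j ≠ k) :
    ((k : ℝ) - j) * (a k * b j - a j * b k) < 0 := by
  rcases hjk.lt_or_gt with h | h
  · have := (div_lt_div_iff₀ (hb k) (hb j)).1 (hab h)
    exact mul_neg_of_pos_of_neg (by simpa using h) (by linarith)
  · have := (div_lt_div_iff₀ (hb j) (hb k)).1 (hab h)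
    exact mul_neg_of_neg_of_pos (by simpa using h) (by linarith)

theorem tsum_mul_tsum_lt_of_strictAnti_div {a b : ℕ → ℝ} {x : ℝ} (hx : 0 < x)
    (hb : ∀ k, 0 < b k) (hab : StrictAnti fun k => a k / b k)
    (ha₀ : Summable fun k => a k * x ^ k) (ha₁ : Summable fun k => k * a k * x ^ k)
    (hb₀ : Summable fun k => b k * x ^ k) (hb₁ : Summable fun k => k * b k * x ^ k) :
    (∑' k, k * a k * x ^ k) * ∑' k, b k * x ^ k <
      (∑' k, a k * x ^ k) * ∑' k, k * b k * x ^ k := by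
  rw [← summable_norm_iff] at ha₀ ha₁ hb₀ hb₁
  set F : ℕ × ℕ → ℝ := fun p => ((p.1 : ℝ) - p.2) * a p.1 * b p.2 * x ^ (p.1 + p.2)
  have hF : ∀ p : ℕ × ℕ, F p = p.1 * a p.1 * x ^ p.1 * (b p.2 * x ^ p.2) -
      a p.1 * x ^ p.1 * (p.2 * b p.2 * x ^ p.2) := fun p => by simp only [F]; ring
  have hsym : ∀ p : ℕ × ℕ, F p + F p.swap =
      ((p.1 : ℝ) - p.2) * (a p.1 * b p.2 - a p.2 * b p.1) * x ^ (p.1 + p.2) := fun p => by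
    simp only [F, Prod.fst_swap, Prod.snd_swap, add_comm p.2 p.1]; ring
  have hsum : Summable F := by
    rw [show F = _ from funext hF]
    exact (summable_mul_of_summable_norm ha₁ hb₀).sub (summable_mul_of_summable_norm ha₀ hb₁)
  have hneg : ∑' p, F p < 0 := by
    refine tsum_neg_of_add_swap_nonpos hsum (fun ⟨k, j⟩ => ?_) (p₀ := (1, 0)) ?_
    · rw [hsym]
      rcases eq_or_ne j k with rfl | hjk
      · simp
      · exact (mul_neg_of_neg_of_pos (sub_mul_sub_neg_of_strictAnti_div hb hab hjk)
          (pow_pos hx _)).le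
    · rw [hsym]
      exact mul_neg_of_neg_of_pos (sub_mul_sub_neg_of_strictAnti_div hb hab one_ne_zero.symm)
        (pow_pos hx _)
  rw [tsum_mul_tsum_of_summable_norm ha₁ hb₀, tsum_mul_tsum_of_summable_norm ha₀ hb₁,
    ← sub_neg, ← (summable_mul_of_summable_norm ha₁ hb₀).tsum_sub
      (summable_mul_of_summable_norm ha₀ hb₁)]
  simpa only [hF] using hneg

noncomputable def besselCoeff (m k : ℕ) : ℝ := 1 / (k.factorial * (m + k).factorial)

noncomputable def besselSeries (m : ℕ) (x : ℝ) : ℝ := ∑' k, besselCoeff m k * x ^ k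

section BesselSeries

variable (m : ℕ)

theorem besselCoeff_pos (k : ℕ) : 0 < besselCoeff m k := by
  unfold besselCoeff; positivity

theorem besselCoeff_le_inv_factorial (k : ℕ) : besselCoeff m k ≤ 1 / k.factorial := by
  unfold besselCoeff
  gcongr
  exact le_mul_of_one_le_right (by positivity) (by exact_mod_cast (m + k).factorial_pos)

theorem besselCoeff_succ_mul (k : ℕ) :
    besselCoeff m (k + 1) * (k + 1) = besselCoeff (m + 1) k := by
  unfold besselCoeff
  rw [Nat.factorial_succ, show m + (k + 1) = m + 1 + k by omega]
  push_cast
  field_simp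

theorem besselCoeff_succ_div (k : ℕ) :
    besselCoeff (m + 1) k / besselCoeff m k = 1 / (m + k + 1) := by
  unfold besselCoeff
  rw [show m + 1 + k = m + k + 1 by omega, Nat.factorial_succ]
  push_cast
  field_simp

theorem strictAnti_besselCoeff_div :
    StrictAnti fun k => besselCoeff (m + 1) k / besselCoeff m k := by
  intro j k hjk
  simp only [besselCoeff_succ_div]
  gcongr

theorem summable_besselCoeff_mul_pow (x : ℝ) : Summable fun k => besselCoeff m k * x ^ k := by
  refine Summable.of_norm_bounded (Real.summable_pow_div_factorial |x|) fun k => ?_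
  rw [norm_mul, norm_pow, Real.norm_eq_abs, Real.norm_eq_abs, abs_of_pos (besselCoeff_pos m k),
    ← one_div_mul_eq_div]
  gcongr
  exact besselCoeff_le_inv_factorial m k

theorem hasSum_natCast_mul_besselCoeff_mul_pow (x : ℝ) :
    HasSum (fun k => k * besselCoeff m k * x ^ k) (x * besselSeries (m + 1) x) := by
  refine (hasSum_nat_add_iff' 1).mp ?_
  have hterm (k : ℕ) : x * (besselCoeff (m + 1) k * x ^ k) =
      ((k + 1 : ℕ) : ℝ) * besselCoeff m (k + 1) * x ^ (k + 1) := by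
    rw [← besselCoeff_succ_mul]; push_cast; ring
  simpa [hterm, besselSeries] using (summable_besselCoeff_mul_pow (m + 1) x).hasSum.mul_left x

theorem besselSeries_pos {x : ℝ} (hx : 0 ≤ x) : 0 < besselSeries m x :=
  (summable_besselCoeff_mul_pow m x).tsum_pos
    (fun k => mul_nonneg (besselCoeff_pos m k).le (pow_nonneg hx k)) 0
    (by simpa using besselCoeff_pos m 0)

theorem hasDerivAt_besselSeries (x : ℝ) :
    HasDerivAt (besselSeries m) (besselSeries (m + 1) x) x := by
  have hshift : besselSeries m =
      fun y => besselCoeff m 0 + ∑' k, besselCoeff m (k + 1) * y ^ (k + 1) := by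
    funext y
    simpa [besselSeries] using (summable_besselCoeff_mul_pow m y).tsum_eq_zero_add
  rw [hshift]
  refine HasDerivAt.const_add _ ?_
  unfold besselSeries
  set R := |x| + 1
  have hxR : x ∈ Metric.ball (0 : ℝ) R := by simp [R]
  refine hasDerivAt_tsum_of_isPreconnected (g' := fun k y => besselCoeff (m + 1) k * y ^ k)
    (summable_besselCoeff_mul_pow (m + 1) R) Metric.isOpen_ball (convex_ball 0 R).isPreconnected
    (fun k y _ => ?_) (fun k y hy => ?_) (Metric.mem_ball_self (by positivity)) ?_ hxR
  · refine ((hasDerivAt_pow (k + 1) y).const_mul (besselCoeff m (k + 1))).congr_deriv ?_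
    rw [← besselCoeff_succ_mul]
    push_cast
    ring
  · rw [norm_mul, norm_pow, Real.norm_eq_abs, abs_of_pos (besselCoeff_pos _ k)]
    rw [Metric.mem_ball, dist_zero_right] at hy
    exact mul_le_mul_of_nonneg_left (pow_le_pow_left₀ (norm_nonneg y) hy.le k)
      (besselCoeff_pos _ k).le
  · simp

theorem besselSeries_mul_lt_sq {x : ℝ} (hx : 0 < x) :
    besselSeries (m + 2) x * besselSeries m x < besselSeries (m + 1) x ^ 2 := by
  have hθ₁ := hasSum_natCast_mul_besselCoeff_mul_pow (m + 1) x
  have hθ₀ := hasSum_natCast_mul_besselCoeff_mul_pow m x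
  have h := tsum_mul_tsum_lt_of_strictAnti_div hx (besselCoeff_pos m)
    (strictAnti_besselCoeff_div m) (summable_besselCoeff_mul_pow (m + 1) x) hθ₁.summable
    (summable_besselCoeff_mul_pow m x) hθ₀.summable
  rw [hθ₁.tsum_eq, hθ₀.tsum_eq] at h
  change x * besselSeries (m + 2) x * besselSeries m x <
    besselSeries (m + 1) x * (x * besselSeries (m + 1) x) at h
  exact lt_of_mul_lt_mul_left (by linarith) hx.le

noncomputable def besselRatio (x : ℝ) : ℝ := besselSeries (m + 1) x / besselSeries m x

theorem hasDerivAt_besselRatio {x : ℝ} (hx : 0 ≤ x) :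
    HasDerivAt (besselRatio m)
      ((besselSeries (m + 2) x * besselSeries m x - besselSeries (m + 1) x ^ 2) /
        besselSeries m x ^ 2) x := by
  have := (hasDerivAt_besselSeries (m + 1) x).div (hasDerivAt_besselSeries m x)
    (besselSeries_pos m hx).ne'
  exact this.congr_deriv (by ring)

theorem deriv_besselRatio_neg {x : ℝ} (hx : 0 < x) : deriv (besselRatio m) x < 0 := by
  rw [(hasDerivAt_besselRatio m hx.le).deriv]
  exact div_neg_of_neg_of_pos (sub_neg.2 (besselSeries_mul_lt_sq m hx))
    (pow_pos (besselSeries_pos m hx.le) 2)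

theorem besselI_eq_mul_besselSeries (r : ℝ) :
    besselI m r = (r / 2) ^ m * besselSeries m (r ^ 2 / 4) := by
  rw [besselI, besselSeries, ← tsum_mul_left]
  refine tsum_congr fun k => ?_
  rw [show (m : ℝ) + k + 1 = ((m + k : ℕ) : ℝ) + 1 by push_cast; ring,
    Real.Gamma_nat_eq_factorial, besselCoeff, pow_add, pow_mul]
  ring

end BesselSeries

theorem P_eq_besselRatio (n : ℕ) {r : ℝ} (hr : 0 < r) :
    P n r = besselRatio n (r ^ 2 / 4) / 2 := by
  have hpos := besselSeries_pos n (by positivity : (0 : ℝ) ≤ r ^ 2 / 4)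
  rw [P, besselI_eq_mul_besselSeries, besselI_eq_mul_besselSeries, besselRatio, pow_succ]
  field_simp

theorem hasDerivAt_P (n : ℕ) {r : ℝ} (hr : 0 < r) :
    HasDerivAt (P n) (deriv (besselRatio n) (r ^ 2 / 4) * (r / 2) / 2) r := by
  have hsq : HasDerivAt (fun s : ℝ => s ^ 2 / 4) (r / 2) r :=
    ((hasDerivAt_pow 2 r).div_const 4).congr_deriv (by push_cast; ring)
  have hcomp := ((hasDerivAt_besselRatio n (by positivity)).differentiableAt.hasDerivAt.comp r
    hsq).div_const 2
  exact hcomp.congr_of_eventuallyEq <|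
    eventually_of_mem (isOpen_Ioi.mem_nhds hr) fun s hs => P_eq_besselRatio n hs

theorem deriv_P_neg (n : ℕ) {r : ℝ} (hr : 0 < r) : deriv (P n) r < 0 := by
  rw [(hasDerivAt_P n hr).deriv]
  exact div_neg_of_neg_of_pos (mul_neg_of_neg_of_pos (deriv_besselRatio_neg n (by positivity))
    (by positivity)) two_pos

theorem P_strictAnti (n : ℕ) :
    StrictAntiOn (P n) (Set.Ioi 0) ∧ ∀ r : ℝ, 0 < r → deriv (P n) r < 0 := by
  refine ⟨strictAntiOn_of_deriv_neg (convex_Ioi (0 : ℝ))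
    (fun r hr => (hasDerivAt_P n hr).continuousAt.continuousWithinAt) ?_,
    fun r hr => deriv_P_neg n hr⟩
  rw [interior_Ioi]
  exact fun r hr => deriv_P_neg n hr
end

section
/- For every integer n ≥ 2 and every r > 0, (n+2)·P_n(r) − (n−1)·P_{n+1}(r) − 3·P_1(r) < 0. -/
open Real Filter Set

/-!
Via the Cauchy product and Vandermonde's identity, every power-series coefficient of
`r I_ν² - r I_{ν+1}² - (2ν+1) I_ν I_{ν+1}` is nonnegative and the lowest one is positive.
Read as a quadratic inequality in `I_{ν+1}/I_ν`, this is the upper bound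
`P_ν(r) < 1/(ν + 1/2 + √((ν+1/2)² + r²))`; fed into the recurrence
`r I_ν = 2(ν+1) I_{ν+1} + r I_{ν+2}` at order `ν + 1`, it gives the lower bound
`1/(ν + 1/2 + √((ν+3/2)² + r²)) < P_ν(r)`. Bounding `P_n` from above and `P_{n+1}`, `P_1`
from below reduces the claim to an elementary inequality between square roots.
-/

open scoped Nat

noncomputable def besselTerm (n : ℕ) (r : ℝ) (k : ℕ) : ℝ :=
  (r / 2) ^ (n + 2 * k) / (k ! * (n + k)!)

lemma besselI_eq_tsum (n : ℕ) (r : ℝ) : besselI n r = ∑' k, besselTerm n r k := by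
  refine tsum_congr fun k => ?_
  rw [besselTerm, show (n : ℝ) + k + 1 = (n + k : ℕ) + 1 by push_cast; ring,
    Real.Gamma_nat_eq_factorial, one_div_mul_eq_div]

lemma summable_norm_besselTerm (n : ℕ) (r : ℝ) : Summable fun k => ‖besselTerm n r k‖ := by
  refine ((Real.summable_pow_div_factorial (|r / 2| ^ 2)).mul_left (|r / 2| ^ n)).of_nonneg_of_le
    (fun _ => norm_nonneg _) fun k => ?_
  have h1 : (1 : ℝ) ≤ (n + k)! := mod_cast (n + k).factorial_pos
  rw [besselTerm, norm_div, norm_pow, Real.norm_eq_abs, Real.norm_of_nonneg (by positivity),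
    pow_add, pow_mul, mul_div_assoc]
  gcongr
  exact le_mul_of_one_le_right (by positivity) h1

lemma summable_besselTerm (n : ℕ) (r : ℝ) : Summable (besselTerm n r) :=
  (summable_norm_besselTerm n r).of_norm

lemma besselI_pos (n : ℕ) {r : ℝ} (hr : 0 < r) : 0 < besselI n r := by
  rw [besselI_eq_tsum]
  exact (summable_besselTerm n r).tsum_pos (fun k => by unfold besselTerm; positivity) 0
    (by unfold besselTerm; positivity)

lemma mul_besselTerm_succ (n : ℕ) (r : ℝ) (k : ℕ) :
    r * besselTerm n r (k + 1) =
      2 * (n + 1) * besselTerm (n + 1) r (k + 1) + r * besselTerm (n + 2) r k := by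
  simp only [besselTerm, show n + (k + 1) = n + k + 1 by omega,
    show n + 1 + (k + 1) = n + k + 2 by omega, show n + 2 + k = n + k + 2 by omega,
    Nat.factorial_succ]
  push_cast
  field_simp
  ring

lemma mul_besselI_eq (n : ℕ) (r : ℝ) :
    r * besselI n r = 2 * (n + 1) * besselI (n + 1) r + r * besselI (n + 2) r := by
  simp only [besselI_eq_tsum, ← tsum_mul_left]
  rw [((summable_besselTerm n r).mul_left r).tsum_eq_zero_add,
    ((summable_besselTerm (n + 1) r).mul_left _).tsum_eq_zero_add, add_assoc,
    ← (((summable_nat_add_iff 1).2 (summable_besselTerm (n + 1) r)).mul_left _).tsum_add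
      ((summable_besselTerm (n + 2) r).mul_left r)]
  congr 1
  · simp only [besselTerm, mul_zero, add_zero, Nat.factorial_succ]
    push_cast
    field_simp
    ring
  · exact tsum_congr (mul_besselTerm_succ n r)

noncomputable def besselProdTerm (μ ν : ℕ) (r : ℝ) (k : ℕ) : ℝ :=
  ((μ + ν + 2 * k).choose k : ℝ) / ((μ + k)! * (ν + k)!) * (r / 2) ^ (μ + ν + 2 * k)

lemma besselTerm_mul_besselTerm (μ ν : ℕ) (r : ℝ) {i j k : ℕ} (h : i + j = k) :
    besselTerm μ r i * besselTerm ν r j =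
      ((ν + k).choose i * (μ + k).choose j : ℝ) / ((μ + k)! * (ν + k)!) *
        (r / 2) ^ (μ + ν + 2 * k) := by
  subst h
  have hν := Nat.add_choose_mul_factorial_mul_factorial (ν + j) i
  have hμ := Nat.add_choose_mul_factorial_mul_factorial (μ + i) j
  rw [show ν + j + i = ν + (i + j) by ring] at hν
  rw [show μ + i + j = μ + (i + j) by ring] at hμ
  rw [besselTerm, besselTerm, div_mul_div_comm, ← pow_add, ← hν, ← hμ,
    show μ + 2 * i + (ν + 2 * j) = μ + ν + 2 * (i + j) by ring]
  have hi : ((ν + (i + j)).choose i : ℝ) ≠ 0 := mod_cast (Nat.choose_pos (by omega)).ne'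
  have hj : ((μ + (i + j)).choose j : ℝ) ≠ 0 := mod_cast (Nat.choose_pos (by omega)).ne'
  push_cast
  field_simp

open Finset in
lemma sum_antidiagonal_besselTerm_mul (μ ν : ℕ) (r : ℝ) (k : ℕ) :
    ∑ ij ∈ antidiagonal k, besselTerm μ r ij.1 * besselTerm ν r ij.2 =
      besselProdTerm μ ν r k := by
  rw [Finset.sum_congr rfl fun ij hij =>
      besselTerm_mul_besselTerm μ ν r (mem_antidiagonal.1 hij),
    ← sum_mul, ← sum_div, besselProdTerm,
    show μ + ν + 2 * k = ν + k + (μ + k) by ring, Nat.add_choose_eq]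
  push_cast
  rfl

lemma besselI_mul_besselI (μ ν : ℕ) (r : ℝ) :
    besselI μ r * besselI ν r = ∑' k, besselProdTerm μ ν r k := by
  simp only [besselI_eq_tsum, ← sum_antidiagonal_besselTerm_mul]
  exact tsum_mul_tsum_eq_tsum_sum_antidiagonal_of_summable_norm
    (summable_norm_besselTerm μ r) (summable_norm_besselTerm ν r)

lemma summable_besselProdTerm (μ ν : ℕ) (r : ℝ) : Summable (besselProdTerm μ ν r) := by
  simpa only [sum_antidiagonal_besselTerm_mul] using
    (summable_norm_sum_mul_antidiagonal_of_summable_norm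
      (summable_norm_besselTerm μ r) (summable_norm_besselTerm ν r)).of_norm

lemma choose_coeff_le (ν k : ℕ) :
    (2 * ν + 1) * (2 * ν + 2 * k + 3).choose (k + 1) +
        2 * (ν + k + 2) * (2 * ν + 2 * k + 2).choose k ≤
      2 * (ν + k + 2) * (2 * ν + 2 * k + 2).choose (k + 1) := by
  have hpascal := Nat.choose_succ_succ (2 * ν + 2 * k + 2) k
  have hratio := Nat.choose_succ_right_eq (2 * ν + 2 * k + 2) k
  rw [show 2 * ν + 2 * k + 2 - k = 2 * ν + k + 2 by omega] at hratio
  rw [show 2 * ν + 2 * k + 3 = 2 * ν + 2 * k + 2 + 1 by ring, hpascal]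
  refine Nat.le_of_mul_le_mul_right ?_ k.succ_pos
  nlinarith [hratio]

lemma besselProdTerm_zero_lt (ν : ℕ) {r : ℝ} (hr : 0 < r) :
    (2 * ν + 1) * besselProdTerm ν (ν + 1) r 0 < r * besselProdTerm ν ν r 0 := by
  simp only [besselProdTerm, mul_zero, add_zero, Nat.choose_zero_right, Nat.factorial_succ,
    show ν + (ν + 1) = 2 * ν + 1 by ring, show ν + ν = 2 * ν by ring]
  rw [← sub_pos]
  have key : r * (1 / (ν ! * ν !) * (r / 2) ^ (2 * ν)) -
      (2 * ν + 1) * (1 / (ν ! * ((ν + 1) * ν !)) * (r / 2) ^ (2 * ν + 1)) =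
      (r / 2) ^ (2 * ν + 1) / (ν ! * ((ν + 1) * ν !)) := by
    field_simp
    ring
  push_cast
  rw [key]
  positivity

lemma besselProdTerm_succ_le (ν : ℕ) {r : ℝ} (hr : 0 ≤ r) (k : ℕ) :
    (2 * ν + 1) * besselProdTerm ν (ν + 1) r (k + 1) +
        r * besselProdTerm (ν + 1) (ν + 1) r k ≤
      r * besselProdTerm ν ν r (k + 1) := by
  have hc : ((2 * ν + 1) * (2 * ν + 2 * k + 3).choose (k + 1) +
      2 * (ν + k + 2) * (2 * ν + 2 * k + 2).choose k : ℝ) ≤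
      2 * (ν + k + 2) * (2 * ν + 2 * k + 2).choose (k + 1) := mod_cast choose_coeff_le ν k
  simp only [besselProdTerm, show ν + (ν + 1) + 2 * (k + 1) = 2 * ν + 2 * k + 3 by ring,
    show ν + 1 + (ν + 1) + 2 * k = 2 * ν + 2 * k + 2 by ring,
    show ν + ν + 2 * (k + 1) = 2 * ν + 2 * k + 2 by ring, show ν + (k + 1) = ν + k + 1 by ring,
    show ν + 1 + (k + 1) = ν + k + 1 + 1 by ring, show ν + 1 + k = ν + k + 1 by ring,
    Nat.factorial_succ (ν + k + 1)]
  set A := ((2 * ν + 2 * k + 3).choose (k + 1) : ℝ)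
  set B := ((2 * ν + 2 * k + 2).choose k : ℝ)
  set C := ((2 * ν + 2 * k + 2).choose (k + 1) : ℝ)
  set F := ((ν + k + 1)! : ℝ)
  have key : r * (C / (F * F) * (r / 2) ^ (2 * ν + 2 * k + 2)) -
      ((2 * ν + 1) * (A / (F * ((ν + k + 2) * F)) * (r / 2) ^ (2 * ν + 2 * k + 3)) +
        r * (B / (F * F) * (r / 2) ^ (2 * ν + 2 * k + 2))) =
      (r / 2) ^ (2 * ν + 2 * k + 3) / (F * F * (ν + k + 2)) *
        (2 * (ν + k + 2) * C - ((2 * ν + 1) * A + 2 * (ν + k + 2) * B)) := by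
    rw [pow_succ]
    field_simp
    ring
  rw [← sub_nonneg]
  push_cast
  rw [show (ν : ℝ) + k + 1 + 1 = ν + k + 2 by ring, key]
  exact mul_nonneg (by positivity) (sub_nonneg.2 hc)

lemma besselI_quadratic_lt (ν : ℕ) {r : ℝ} (hr : 0 < r) :
    (2 * ν + 1) * (besselI ν r * besselI (ν + 1) r) +
        r * (besselI (ν + 1) r * besselI (ν + 1) r) <
      r * (besselI ν r * besselI ν r) := by
  have hf := (summable_besselProdTerm ν (ν + 1) r).mul_left (2 * ν + 1 : ℝ)
  have hg := (summable_besselProdTerm (ν + 1) (ν + 1) r).mul_left r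
  have hh := (summable_besselProdTerm ν ν r).mul_left r
  simp only [besselI_mul_besselI, ← tsum_mul_left]
  calc _ = (2 * ν + 1) * besselProdTerm ν (ν + 1) r 0 +
        ∑' k, ((2 * ν + 1) * besselProdTerm ν (ν + 1) r (k + 1) +
          r * besselProdTerm (ν + 1) (ν + 1) r k) := by
        rw [hf.tsum_eq_zero_add, add_assoc, ((summable_nat_add_iff 1).2 hf).tsum_add hg]
    _ ≤ (2 * ν + 1) * besselProdTerm ν (ν + 1) r 0 +
        ∑' k, r * besselProdTerm ν ν r (k + 1) := by
        grw [Summable.tsum_le_tsum (besselProdTerm_succ_le ν hr.le)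
          (((summable_nat_add_iff 1).2 hf).add hg) ((summable_nat_add_iff 1).2 hh)]
    _ < r * besselProdTerm ν ν r 0 + ∑' k, r * besselProdTerm ν ν r (k + 1) := by
        grw [besselProdTerm_zero_lt ν hr]
    _ = _ := hh.tsum_eq_zero_add.symm

lemma P_lt_inv_add_sqrt (ν : ℕ) {r : ℝ} (hr : 0 < r) :
    P ν r < 1 / (ν + 1 / 2 + √((ν + 1 / 2) ^ 2 + r ^ 2)) := by
  have hq := besselI_pos ν hr
  have hp := besselI_pos (ν + 1) hr
  have hquad := besselI_quadratic_lt ν hr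
  set a : ℝ := ν + 1 / 2
  set s := √(a ^ 2 + r ^ 2)
  have hs : s ^ 2 = a ^ 2 + r ^ 2 := Real.sq_sqrt (by positivity)
  rw [P, div_lt_div_iff₀ (by positivity) (by positivity), one_mul]
  have hfactor : (besselI (ν + 1) r * (a + s) - r * besselI ν r) *
      (r * besselI (ν + 1) r + (s + a) * besselI ν r) =
      (a + s) * ((2 * ν + 1) * (besselI ν r * besselI (ν + 1) r) +
        r * (besselI (ν + 1) r * besselI (ν + 1) r) - r * (besselI ν r * besselI ν r)) := by
    linear_combination besselI ν r * besselI (ν + 1) r * hs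
  have hneg : (besselI (ν + 1) r * (a + s) - r * besselI ν r) *
      (r * besselI (ν + 1) r + (s + a) * besselI ν r) < 0 := by
    rw [hfactor]
    exact mul_neg_of_pos_of_neg (by positivity) (by linarith)
  linarith [neg_of_mul_neg_left hneg (by positivity)]

lemma inv_add_sqrt_lt_P (ν : ℕ) {r : ℝ} (hr : 0 < r) :
    1 / (ν + 1 / 2 + √((ν + 3 / 2) ^ 2 + r ^ 2)) < P ν r := by
  have hp := besselI_pos (ν + 1) hr
  have hq := besselI_pos ν hr
  set b : ℝ := ν + 3 / 2 with hb_def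
  set s := √(b ^ 2 + r ^ 2)
  have hs : s ^ 2 = b ^ 2 + r ^ 2 := Real.sq_sqrt (by positivity)
  have hupper := P_lt_inv_add_sqrt (ν + 1) hr
  rw [show ((ν + 1 : ℕ) : ℝ) + 1 / 2 = b by push_cast; ring, P,
    div_lt_div_iff₀ (by positivity) (by positivity), one_mul] at hupper
  have htail : r * besselI (ν + 2) r < (s - b) * besselI (ν + 1) r := by
    refine lt_of_mul_lt_mul_left ?_ (by positivity : 0 ≤ b + s)
    calc (b + s) * (r * besselI (ν + 2) r) = r * (besselI (ν + 2) r * (b + s)) := by ring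
      _ < r * (r * besselI (ν + 1) r) := mul_lt_mul_of_pos_left hupper hr
      _ = (b + s) * ((s - b) * besselI (ν + 1) r) := by
        linear_combination (-besselI (ν + 1) r) * hs
  rw [hb_def] at htail
  rw [P, div_lt_div_iff₀ (by positivity) (by positivity), one_mul]
  linarith [mul_besselI_eq ν r]

lemma sqrt_bounds_combination_lt {x : ℝ} (r : ℝ) (hx : 2 ≤ x) :
    (x + 2) / (x + 1 / 2 + √((x + 1 / 2) ^ 2 + r ^ 2)) <
      (x - 1) / (x + 3 / 2 + √((x + 5 / 2) ^ 2 + r ^ 2)) +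
        3 / (3 / 2 + √((5 / 2) ^ 2 + r ^ 2)) := by
  set a := √((x + 1 / 2) ^ 2 + r ^ 2)
  set b := √((x + 5 / 2) ^ 2 + r ^ 2)
  set c := √((5 / 2) ^ 2 + r ^ 2)
  have ha : a ^ 2 = (x + 1 / 2) ^ 2 + r ^ 2 := Real.sq_sqrt (by positivity)
  have hxa : x + 1 / 2 ≤ a := Real.le_sqrt_of_sq_le (by nlinarith)
  have hca : c ≤ a := Real.sqrt_le_sqrt (by nlinarith)
  have hcb : c < b := Real.sqrt_lt_sqrt (by positivity) (by nlinarith)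
  have hba : b ≤ a + 2 := Real.sqrt_le_iff.2 ⟨by positivity, by nlinarith⟩
  -- With `A`, `B`, `C` the three denominators: `(x - 1)(1/A - 1/B) < 3(1/C - 1/A)`, cleared of
  -- fractions, since `x + 2 = (x - 1) + 3`.
  have key : (x - 1) * ((x + 3 / 2 + b) - (x + 1 / 2 + a)) * (3 / 2 + c) <
      3 * ((x + 1 / 2 + a) - (3 / 2 + c)) * (x + 3 / 2 + b) :=
    calc _ ≤ (x - 1) * 3 * (3 / 2 + c) := by gcongr <;> linarith
      _ < (x - 1) * 3 * (x + 3 / 2 + b) := by gcongr <;> linarith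
      _ ≤ 3 * ((x + 1 / 2 + a) - (3 / 2 + c)) * (x + 3 / 2 + b) :=
        mul_le_mul_of_nonneg_right (by linarith) (by positivity)
  rw [div_add_div _ _ (by positivity) (by positivity),
    div_lt_div_iff₀ (by positivity) (by positivity)]
  linarith

theorem P_inequality (n : ℕ) (hn : 2 ≤ n) (r : ℝ) (hr : 0 < r) :
    ((n : ℝ) + 2) * P n r - ((n : ℝ) - 1) * P (n + 1) r - 3 * P 1 r < 0 := by
  have hx : (2 : ℝ) ≤ n := mod_cast hn
  have hPn := P_lt_inv_add_sqrt n hr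
  have hPn1 := inv_add_sqrt_lt_P (n + 1) hr
  have hP1 := inv_add_sqrt_lt_P 1 hr
  push_cast at hPn1 hP1
  rw [show (n : ℝ) + 1 + 1 / 2 = n + 3 / 2 by ring,
    show (n : ℝ) + 1 + 3 / 2 = n + 5 / 2 by ring] at hPn1
  rw [show (1 : ℝ) + 1 / 2 = 3 / 2 by norm_num, show (1 : ℝ) + 3 / 2 = 5 / 2 by norm_num] at hP1
  have key := sqrt_bounds_combination_lt r hx
  have b0 := mul_lt_mul_of_pos_left hPn (by linarith : (0 : ℝ) < n + 2)
  have b1 := mul_lt_mul_of_pos_left hPn1 (by linarith : (0 : ℝ) < n - 1)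
  have b2 := mul_lt_mul_of_pos_left hP1 (by norm_num : (0 : ℝ) < 3)
  simp only [mul_one_div] at b0 b1 b2
  linarith
end
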